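/- arXiv:1910.07586 — 3 statements merged into one kernel-verified Lean document; each statement's English description precedes it below -/
import Mathlib

section
/- In a finite poset, the minimum number of chains needed to cover all elements equals the maximum size of an antichain (Dilworth's theorem). -/
/-!
Galvin's proof, with a partition into chains encoded as a colouring whose colour classes are
chains. Remove a maximal element `a` of `s`; by induction `s' = s.erase a` is coloured by
`w = width s'` chains, and then every maximum antichain of `s'` meets every colour class. In each
class take the largest point that lies in some maximum antichain; these tops form an antichain of
size `w`. If `a` lies above none of them, adding `a` gives an antichain of size `w + 1`, and `{a}`
is one more chain. Otherwise `a` lies above the top `x` of some class; the chain formed by `a` and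
the points of that class below `x` meets every maximum antichain of `s'`, so removing it leaves
width `< w`, and the rest is coloured by induction.
-/

theorem isAntichain_lt_iff_isAntichain_le {α : Type*} [PartialOrder α] {s : Set α} :
    IsAntichain (· < ·) s ↔ IsAntichain (· ≤ ·) s :=
  ⟨fun h _ hx _ hy hne hle => h hx hy hne (hle.lt_of_ne hne), fun h => h.mono fun _ _ => le_of_lt⟩

namespace Finset

variable {α ι : Type*} [PartialOrder α]

open Classical in
noncomputable def width (s : Finset α) : ℕ :=
  (s.powerset.filter fun t : Finset α => IsAntichain (· ≤ ·) (t : Set α)).sup card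

/-- Maximum in cardinality, unlike Mathlib's `IsMaxAntichain` (maximal under inclusion). -/
structure IsMaximumAntichain (s t : Finset α) : Prop where
  subset : t ⊆ s
  isAntichain : IsAntichain (· ≤ ·) (t : Set α)
  card_eq : #t = s.width

theorem card_le_width {s t : Finset α} (hts : t ⊆ s) (ht : IsAntichain (· ≤ ·) (t : Set α)) :
    #t ≤ s.width := by
  classical
  exact le_sup (f := card) (mem_filter.2 ⟨mem_powerset.2 hts, ht⟩)

theorem exists_isMaximumAntichain (s : Finset α) : ∃ t, s.IsMaximumAntichain t := by
  classical
  obtain ⟨t, ht, hcard⟩ :=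
    exists_mem_eq_sup (s.powerset.filter fun t : Finset α => IsAntichain (· ≤ ·) (t : Set α))
    ⟨∅, mem_filter.2 ⟨empty_mem_powerset s, by simp⟩⟩ card
  obtain ⟨hts, ht⟩ := mem_filter.1 ht
  exact ⟨t, ⟨mem_powerset.1 hts, ht, hcard.symm⟩⟩

theorem width_mono {s t : Finset α} (hst : s ⊆ t) : s.width ≤ t.width := by
  obtain ⟨u, hu⟩ := s.exists_isMaximumAntichain
  exact hu.card_eq ▸ card_le_width (hu.subset.trans hst) hu.isAntichain

def IsChainColoring (s : Finset α) (f : α → ι) : Prop :=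
  ∀ x ∈ s, ∀ y ∈ s, f x = f y → x ≤ y ∨ y ≤ x

def IsTopOfColour (s : Finset α) (f : α → ι) (x : α) : Prop :=
  (∃ t, s.IsMaximumAntichain t ∧ x ∈ t) ∧
    ∀ t, s.IsMaximumAntichain t → ∀ y ∈ t, f y = f x → y ≤ x

namespace IsChainColoring

variable {s t : Finset α} {f : α → ι}

theorem injOn_of_isAntichain (hf : IsChainColoring s f) (hts : t ⊆ s)
    (ht : IsAntichain (· ≤ ·) (t : Set α)) : Set.InjOn f t := by
  intro x hx y hy hxy
  rcases hf x (hts hx) y (hts hy) hxy with h | h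
  · exact ht.eq hx hy h
  · exact (ht.eq hy hx h).symm

theorem card_le_card_image [DecidableEq ι] (hf : IsChainColoring s f) (hts : t ⊆ s)
    (ht : IsAntichain (· ≤ ·) (t : Set α)) : #t ≤ #(s.image f) :=
  (card_image_of_injOn (hf.injOn_of_isAntichain hts ht)).ge.trans
    (card_le_card (image_subset_image hts))

theorem width_le_card_image [DecidableEq ι] (hf : IsChainColoring s f) :
    s.width ≤ #(s.image f) := by
  obtain ⟨t, ht⟩ := s.exists_isMaximumAntichain
  exact ht.card_eq ▸ hf.card_le_card_image ht.subset ht.isAntichain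

section Optimal

variable [DecidableEq ι]

/-- `f` is injective on the antichain `t`, and `#t = width s` leaves no colour unused. -/
theorem exists_mem_of_isMaximumAntichain (hf : IsChainColoring s f)
    (hfw : #(s.image f) ≤ s.width) (ht : s.IsMaximumAntichain t) {i : ι} (hi : i ∈ s.image f) :
    ∃ y ∈ t, f y = i := by
  have himage : t.image f = s.image f := by
    refine eq_of_subset_of_card_le (image_subset_image ht.subset) ?_
    rw [card_image_of_injOn (hf.injOn_of_isAntichain ht.subset ht.isAntichain), ht.card_eq]
    exact hfw
  exact mem_image.1 (himage ▸ hi)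

theorem exists_isTopOfColour (hf : IsChainColoring s f) (hfw : #(s.image f) ≤ s.width) {i : ι}
    (hi : i ∈ s.image f) : ∃ x, f x = i ∧ IsTopOfColour s f x := by
  classical
  set P := {y ∈ s | f y = i ∧ ∃ t, s.IsMaximumAntichain t ∧ y ∈ t}
  have hP : P.Nonempty := by
    obtain ⟨t, ht⟩ := s.exists_isMaximumAntichain
    obtain ⟨y, hyt, hyi⟩ := hf.exists_mem_of_isMaximumAntichain hfw ht hi
    exact ⟨y, mem_filter.2 ⟨ht.subset hyt, hyi, t, ht, hyt⟩⟩
  obtain ⟨x, hxP, hxmax⟩ := P.exists_maximal hP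
  obtain ⟨hxs, hxi, hxt⟩ := mem_filter.1 hxP
  refine ⟨x, hxi, hxt, fun t ht y hyt hyx => ?_⟩
  have hyP : y ∈ P := mem_filter.2 ⟨ht.subset hyt, hyx.trans hxi, t, ht, hyt⟩
  rcases hf y (ht.subset hyt) x hxs hyx with h | h
  · exact h
  · exact hxmax hyP h

theorem isAntichain_setOf_isTopOfColour (hf : IsChainColoring s f)
    (hfw : #(s.image f) ≤ s.width) : IsAntichain (· ≤ ·) {x | IsTopOfColour s f x} := by
  refine isAntichain_iff_forall_not_lt.2 fun x hx x' hx' hlt => ?_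
  obtain ⟨⟨u, hu, hxu⟩, hxtop⟩ := hx
  obtain ⟨⟨t, ht, hx't⟩, -⟩ := hx'
  obtain ⟨y, hyt, hyx⟩ :=
    hf.exists_mem_of_isMaximumAntichain hfw ht (mem_image_of_mem f (hu.subset hxu))
  exact ht.isAntichain.not_lt hyt hx't ((hxtop t ht y hyt hyx).trans_lt hlt)

theorem width_le_card_filter_isTopOfColour [DecidablePred (IsTopOfColour s f)]
    (hf : IsChainColoring s f) (hfw : #(s.image f) ≤ s.width) :
    s.width ≤ #{x ∈ s | IsTopOfColour s f x} := by
  calc s.width ≤ #(s.image f) := hf.width_le_card_image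
    _ ≤ #({x ∈ s | IsTopOfColour s f x}.image f) := by
      refine card_le_card fun i hi => ?_
      obtain ⟨x, rfl, hx⟩ := hf.exists_isTopOfColour hfw hi
      obtain ⟨t, ht, hxt⟩ := hx.1
      exact mem_image_of_mem f (mem_filter.2 ⟨ht.subset hxt, hx⟩)
    _ ≤ #{x ∈ s | IsTopOfColour s f x} := card_image_le

/-- Every maximum antichain of `s` meets the colour class of `x` below `x`. -/
theorem width_lt_of_isTopOfColour (hf : IsChainColoring s f) (hfw : #(s.image f) ≤ s.width)
    {x : α} (hx : IsTopOfColour s f x) {u : Finset α} (hus : u ⊆ s)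
    (hux : ∀ y ∈ u, f y = f x → ¬y ≤ x) : u.width < s.width := by
  obtain ⟨t, ht⟩ := u.exists_isMaximumAntichain
  have hts : t ⊆ s := ht.subset.trans hus
  refine (ht.card_eq ▸ card_le_width hts ht.isAntichain).lt_of_ne fun heq => ?_
  have ht' : s.IsMaximumAntichain t := ⟨hts, ht.isAntichain, ht.card_eq.trans heq⟩
  obtain ⟨⟨v, hv, hxv⟩, hxtop⟩ := hx
  obtain ⟨y, hyt, hyx⟩ :=
    hf.exists_mem_of_isMaximumAntichain hfw ht' (mem_image_of_mem f (hv.subset hxv))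
  exact hux y (ht.subset hyt) hyx (hxtop t ht' y hyt hyx)

end Optimal

theorem exists_insert_chain [DecidableEq α] {K : Finset α} {f : α → ℕ}
    (hf : IsChainColoring (s \ K) f) (hK : IsChain (· ≤ ·) (K : Set α)) :
    ∃ g : α → ℕ, IsChainColoring s g ∧ #(s.image g) ≤ #((s \ K).image f) + 1 := by
  refine ⟨fun x => if x ∈ K then 0 else f x + 1, ?_, ?_⟩
  · intro x hx y hy (hxy : (if x ∈ K then 0 else f x + 1) = if y ∈ K then 0 else f y + 1)
    split_ifs at hxy with hxK hyK hyK
    · exact hK.total hxK hyK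
    · exact hf x (mem_sdiff.2 ⟨hx, hxK⟩) y (mem_sdiff.2 ⟨hy, hyK⟩) (by omega)
  · calc #(s.image fun x => if x ∈ K then 0 else f x + 1)
        ≤ #(insert 0 (((s \ K).image f).image (· + 1))) := by
          refine card_le_card fun n hn => ?_
          obtain ⟨x, hx, rfl⟩ := mem_image.1 hn
          by_cases hxK : x ∈ K
          · simp [hxK]
          · simp only [hxK, if_false]
            exact mem_insert_of_mem <|
              mem_image_of_mem _ (mem_image_of_mem f (mem_sdiff.2 ⟨hx, hxK⟩))
      _ ≤ #((s \ K).image f) + 1 := (card_insert_le _ _).trans (Nat.succ_le_succ card_image_le)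

end IsChainColoring

theorem exists_isChain_width_sdiff_lt [DecidableEq α] [DecidableEq ι] {s : Finset α} {a : α}
    (ha : Maximal (· ∈ s) a) {f : α → ι} (hf : IsChainColoring (s.erase a) f)
    (hfw : #((s.erase a).image f) ≤ (s.erase a).width) :
    ∃ K ⊆ s, IsChain (· ≤ ·) (K : Set α) ∧ (s \ K).width < s.width := by
  classical
  set s' := s.erase a
  set X := {x ∈ s' | IsTopOfColour s' f x}
  have hX : IsAntichain (· ≤ ·) (X : Set α) :=
    (hf.isAntichain_setOf_isTopOfColour hfw).subset fun x hx => (mem_filter.1 hx).2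
  by_cases hcase : ∃ x ∈ X, x ≤ a
  · obtain ⟨x, hxX, hxa⟩ := hcase
    obtain ⟨-, hx⟩ := mem_filter.1 hxX
    set K := insert a {y ∈ s' | f y = f x ∧ y ≤ x}
    have hsK : s \ K ⊆ s' := fun y hy =>
      mem_erase.2 ⟨fun h => (mem_sdiff.1 hy).2 (h ▸ mem_insert_self a _), (mem_sdiff.1 hy).1⟩
    refine ⟨K, insert_subset ha.1 ((filter_subset _ _).trans (erase_subset a s)), ?_, ?_⟩
    · rw [coe_insert]
      refine IsChain.insert ?_ fun y hy _ => Or.inr ((mem_filter.1 hy).2.2.trans hxa)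
      intro y hy z hz _
      obtain ⟨hys, hyx, -⟩ := mem_filter.1 hy
      obtain ⟨hzs, hzx, -⟩ := mem_filter.1 hz
      exact hf y hys z hzs (hyx.trans hzx.symm)
    · refine (hf.width_lt_of_isTopOfColour hfw hx hsK fun y hy hyx hyle => ?_).trans_le
        (width_mono (erase_subset a s))
      exact (mem_sdiff.1 hy).2 (mem_insert_of_mem (mem_filter.2 ⟨hsK hy, hyx, hyle⟩))
  · push Not at hcase
    refine ⟨{a}, singleton_subset_iff.2 ha.1, by simp, ?_⟩
    have haX : a ∉ X := fun h => (mem_filter.1 h).1 |> notMem_erase a s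
    have hXa : IsAntichain (· ≤ ·) ((insert a X : Finset α) : Set α) := by
      rw [coe_insert]
      refine hX.insert (fun x hx _ => hcase x hx) fun x hx _ hax => ?_
      exact ha.not_gt (erase_subset a s (mem_filter.1 hx).1)
        (hax.lt_of_ne (by rintro rfl; exact haX hx))
    calc (s \ {a}).width = s'.width := by rw [sdiff_singleton_eq_erase]
      _ < #(insert a X) := by
          rw [card_insert_of_notMem haX]
          exact Nat.lt_succ_of_le (hf.width_le_card_filter_isTopOfColour hfw)
      _ ≤ s.width :=
          card_le_width (insert_subset ha.1 ((filter_subset _ _).trans (erase_subset a s))) hXa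

theorem exists_isChainColoring_card_image_le_width (s : Finset α) :
    ∃ f : α → ℕ, IsChainColoring s f ∧ #(s.image f) ≤ s.width := by
  classical
  induction s using Finset.strongInduction with
  | H s ih =>
  obtain rfl | hs := s.eq_empty_or_nonempty
  · exact ⟨0, by simp [IsChainColoring]⟩
  obtain ⟨a, ha⟩ := s.exists_maximal hs
  obtain ⟨f, hf, hfw⟩ := ih _ (erase_ssubset ha.1)
  obtain ⟨K, hKs, hK, hlt⟩ := exists_isChain_width_sdiff_lt ha hf hfw
  have hKne : K.Nonempty := nonempty_iff_ne_empty.2 fun h => by simp [h] at hlt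
  obtain ⟨g, hg, hgw⟩ := ih _ (sdiff_ssubset hKs hKne)
  obtain ⟨h, hh, hhw⟩ := hg.exists_insert_chain hK
  exact ⟨h, hh, by omega⟩

theorem width_le_card_of_chain_cover {s : Finset α} {C : Finset (Set α)}
    (hC : ∀ c ∈ C, IsChain (· ≤ ·) c) (hcov : ∀ x ∈ s, ∃ c ∈ C, x ∈ c) : s.width ≤ #C := by
  classical
  choose! g hgC hg using hcov
  have hgc : IsChainColoring s g := fun x hx y hy hxy =>
    (hC _ (hgC x hx)).total (hg x hx) (hxy ▸ hg y hy)
  exact hgc.width_le_card_image.trans (card_le_card (image_subset_iff.2 hgC))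

end Finset

open Finset

/-- Dilworth's theorem: in a finite poset, the minimum number of chains needed to
cover all elements equals the maximum size of an antichain. -/
theorem dilworth (V : Type*) [Fintype V] [PartialOrder V] :
    sInf {n : ℕ | ∃ C : Finset (Set V),
        C.card = n ∧ (∀ c ∈ C, IsChain (· ≤ ·) c) ∧ ∀ v : V, ∃ c ∈ C, v ∈ c}
      = sSup {n : ℕ | ∃ A : Finset V,
        A.card = n ∧ IsAntichain (· < ·) (A : Set V)} := by
  classical
  obtain ⟨f, hf, hfw⟩ := exists_isChainColoring_card_image_le_width (univ : Finset V)
  set C := (univ.image f).image fun i => {x | f x = i}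
  have hC : ∀ c ∈ C, IsChain (· ≤ ·) c := by
    simp only [C, mem_image]
    rintro _ ⟨_, ⟨y, -, rfl⟩, rfl⟩ x (hx : f x = f y) z (hz : f z = f y) -
    exact hf x (mem_univ x) z (mem_univ z) (hx.trans hz.symm)
  have hcov : ∀ x, ∃ c ∈ C, x ∈ c := fun x =>
    ⟨_, mem_image_of_mem _ (mem_image_of_mem f (mem_univ x)), rfl⟩
  have hCw : #C = univ.width :=
    card_image_le.trans hfw |>.antisymm (width_le_card_of_chain_cover hC fun x _ => hcov x)
  obtain ⟨t, ht⟩ := (univ : Finset V).exists_isMaximumAntichain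
  refine (IsLeast.csInf_eq (a := (univ : Finset V).width) ?_).trans (IsGreatest.csSup_eq ?_).symm
  · refine ⟨⟨C, hCw, hC, hcov⟩, ?_⟩
    rintro n ⟨D, rfl, hD, hDcov⟩
    exact width_le_card_of_chain_cover hD fun x _ => hDcov x
  · refine ⟨⟨t, ht.card_eq, isAntichain_lt_iff_isAntichain_le.2 ht.isAntichain⟩, ?_⟩
    rintro n ⟨A, rfl, hA⟩
    exact card_le_width (subset_univ A) (isAntichain_lt_iff_isAntichain_le.1 hA)
end

section
/- Let G be the bipartite graph associated with a finite poset (V, ≺), with vertex classes V⁻ and V⁺ (two copies of V) and an edge (v⁻, u⁺) whenever v ≺ u. If M is a matching in G, then the edges of M, viewed as the relations {(v,u) : (v⁻,u⁺) ∈ M} on V, decompose V into a collection of at most |V| − |M| vertex-disjoint chains covering V. -/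
/-!
Following the matching edges `v ↦ u` from each element traces out paths; since a matching is
injective in both coordinates, "joined by a path in one direction or the other" is an
equivalence relation, and its classes are chains because every edge goes up. Each class
contains an element with no incoming edge (a minimal one), so choosing for every class such an
element shows there are at most `|V| - |M|` classes: the elements with an incoming edge are the
`|M|` distinct second coordinates of `M`.
-/

namespace Relation

variable {α : Type*} {r : α → α → Prop}

def PathComparable (r : α → α → Prop) (a b : α) : Prop :=
  ReflTransGen r a b ∨ ReflTransGen r b a

theorem pathComparable_trans (hl : Relator.LeftUnique r) (hr : Relator.RightUnique r)
    {a b c : α} : PathComparable r a b → PathComparable r b c → PathComparable r a c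
  | .inl hab, .inl hbc => .inl (hab.trans hbc)
  | .inr hba, .inr hcb => .inr (hcb.trans hba)
  | .inr hba, .inl hbc => hba.total_of_right_unique hr hbc
  | .inl hab, .inr hcb => by
    have hl' : Relator.RightUnique (Function.swap r) := fun _ _ _ h h' => hl h h'
    simpa only [reflTransGen_swap, PathComparable, or_comm] using
      (reflTransGen_swap.2 hab).total_of_right_unique hl' (reflTransGen_swap.2 hcb)

def pathSetoid (hl : Relator.LeftUnique r) (hr : Relator.RightUnique r) : Setoid α where
  r := PathComparable r
  iseqv := ⟨fun _ => .inl .refl, Or.symm, pathComparable_trans hl hr⟩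

theorem ReflTransGen.le_of_rel_le [Preorder α] (hr : ∀ a b, r a b → a ≤ b) {a b : α}
    (h : ReflTransGen r a b) : a ≤ b := by
  induction h with
  | refl => rfl
  | tail _ hbc ih => exact ih.trans (hr _ _ hbc)

theorem PathComparable.total_of_rel_le [Preorder α] (hr : ∀ a b, r a b → a ≤ b) {a b : α}
    (h : PathComparable r a b) : a ≤ b ∨ b ≤ a :=
  h.imp (·.le_of_rel_le hr) (·.le_of_rel_le hr)

theorem exists_reflTransGen_forall_not_rel [Preorder α] [WellFoundedLT α]
    (hr : ∀ a b, r a b → a < b) (x : α) : ∃ b, ReflTransGen r b x ∧ ∀ a, ¬ r a b := by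
  obtain ⟨b, hbx, hmin⟩ := wellFounded_lt.has_min {b | ReflTransGen r b x} ⟨x, .refl⟩
  exact ⟨b, hbx, fun a hab => hmin a (hbx.head hab) (hr a b hab)⟩

end Relation

open Relation in
theorem matching_gives_chain_cover_general (V : Type*) [Fintype V] [PartialOrder V]
    (M : Finset (V × V))
    (hedge : ∀ p ∈ M, p.1 < p.2)
    (hout : ∀ v u u', (v, u) ∈ M → (v, u') ∈ M → u = u')
    (hin : ∀ v v' u, (v, u) ∈ M → (v', u) ∈ M → v = v') :
    ∃ C : Finset (Set V),
      C.card ≤ Fintype.card V - M.card ∧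
      (∀ c ∈ C, IsChain (· ≤ ·) c) ∧
      (∀ v : V, ∃ c ∈ C, v ∈ c) ∧
      ((C : Set (Set V)).PairwiseDisjoint id) ∧
      (∀ p ∈ M, ∃ c ∈ C, p.1 ∈ c ∧ p.2 ∈ c) := by
  classical
  let s := pathSetoid (r := fun v u => (v, u) ∈ M) (hin · · ·) (hout · · ·)
  let S := Finset.univ \ M.image Prod.snd
  have hS : ∀ x, ∃ b ∈ S, s x b := fun x => by
    obtain ⟨b, hbx, hb⟩ := exists_reflTransGen_forall_not_rel (fun v u h => hedge (v, u) h) x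
    refine ⟨b, ?_, .inr hbx⟩
    simpa [S] using fun v => hb v
  have hcard : S.card = Fintype.card V - M.card := by
    rw [Finset.card_univ_sdiff, Finset.card_image_of_injOn]
    intro p hp q hq hpq
    exact Prod.ext (hin _ _ _ hp (by rw [hpq]; exact hq)) hpq
  refine ⟨S.image fun b => {x | s x b}, hcard ▸ Finset.card_image_le, ?_, ?_, ?_, ?_⟩
  · simp only [Finset.mem_image]
    rintro _ ⟨b, -, rfl⟩ x hx y hy -
    exact (s.trans hx (s.symm hy)).total_of_rel_le fun v u h => (hedge (v, u) h).le
  · intro v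
    obtain ⟨b, hb, hvb⟩ := hS v
    exact ⟨_, Finset.mem_image_of_mem _ hb, hvb⟩
  · refine s.isPartition_classes.pairwiseDisjoint.subset ?_
    simp only [Finset.coe_image]
    rintro _ ⟨b, -, rfl⟩
    exact s.mem_classes b
  · intro p hp
    obtain ⟨b, hb, hpb⟩ := hS p.1
    exact ⟨_, Finset.mem_image_of_mem _ hb, hpb, s.trans (.inr (.single hp)) hpb⟩

/-- A matching in the bipartite comparability graph of a finite poset (edges (v⁻,u⁺)
for v < u) decomposes V into at most |V| - |M| vertex-disjoint chains covering V. -/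
theorem matching_gives_chain_cover (V : Type*) [Fintype V] [PartialOrder V]
    [DecidableEq V] (M : Finset (V × V))
    (hedge : ∀ p ∈ M, p.1 < p.2)
    (hout : ∀ v u u', (v, u) ∈ M → (v, u') ∈ M → u = u')
    (hin : ∀ v v' u, (v, u) ∈ M → (v', u) ∈ M → v = v') :
    ∃ C : Finset (Set V),
      C.card ≤ Fintype.card V - M.card ∧
      (∀ c ∈ C, IsChain (· ≤ ·) c) ∧
      (∀ v : V, ∃ c ∈ C, v ∈ c) ∧
      ((C : Set (Set V)).PairwiseDisjoint id) ∧
      (∀ p ∈ M, ∃ c ∈ C, p.1 ∈ c ∧ p.2 ∈ c) :=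
  matching_gives_chain_cover_general V M hedge hout hin
end

section
/- Let M be a maximum matching in the bipartite graph G of a finite poset (V, ≺), let Q be the set of unmatched vertices of V⁻, and let S be the set of vertices reachable from Q by alternating paths (paths alternating between non-matching and matching edges, starting with a non-matching edge). Then A = {v ∈ V : v⁻ ∈ S and v⁺ ∉ S} is an antichain. -/
/-- A matching in the bipartite comparability graph of a poset. -/
def IsPosetMatching {V : Type*} [PartialOrder V] (M : Finset (V × V)) : Prop :=
  (∀ p ∈ M, p.1 < p.2) ∧
  (∀ v u u', (v, u) ∈ M → (v, u') ∈ M → u = u') ∧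
  (∀ v v' u, (v, u) ∈ M → (v', u) ∈ M → v = v')

/-- Vertices of the bipartite graph `V⁻ ⊕ V⁺` reachable by an alternating path
starting at an unmatched vertex of `V⁻` (first edge non-matching, then edges
alternate matched/unmatched).  `Sum.inl v` stands for `v⁻`, `Sum.inr u` for `u⁺`. -/
inductive AltReach {V : Type*} [PartialOrder V] (M : Finset (V × V)) : V ⊕ V → Prop
  | base (v : V) (hv : ∀ u, (v, u) ∉ M) : AltReach M (Sum.inl v)
  | stepUnmatched (v u : V) (h : AltReach M (Sum.inl v)) (hlt : v < u)
      (hnm : (v, u) ∉ M) : AltReach M (Sum.inr u)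
  | stepMatched (v u : V) (h : AltReach M (Sum.inr u)) (hm : (v, u) ∈ M) :
      AltReach M (Sum.inl v)

/-! If `v⁻` is reachable, so is `w⁺` for every `w > v`: either through the non-matching edge
`(v⁻, w⁺)`, or, when `(v, w) ∈ M`, because a matched `v⁻` can only have been entered along its
unique matching edge, i.e. from `w⁺`. Hence no `v < w` can have `v⁻ ∈ S` and `w⁺ ∉ S`. -/

theorem AltReach.inr_of_inl_of_mem {V : Type*} [PartialOrder V] {M : Finset (V × V)}
    (hM : IsPosetMatching M) {v w : V} (hv : AltReach M (Sum.inl v)) (hvw : (v, w) ∈ M) :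
    AltReach M (Sum.inr w) := by
  cases hv with
  | base _ hunmatched => exact absurd hvw (hunmatched w)
  | stepMatched _ u hu hvu => exact hM.2.1 v u w hvu hvw ▸ hu

theorem AltReach.inr_of_inl_of_lt {V : Type*} [PartialOrder V] {M : Finset (V × V)}
    (hM : IsPosetMatching M) {v w : V} (hv : AltReach M (Sum.inl v)) (hvw : v < w) :
    AltReach M (Sum.inr w) := by
  by_cases hm : (v, w) ∈ M
  · exact hv.inr_of_inl_of_mem hM hm
  · exact .stepUnmatched v w hv hvw hm

theorem altReach_antichain_general (V : Type*) [PartialOrder V]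
    (M : Finset (V × V)) (hM : IsPosetMatching M) :
    IsAntichain (· < ·)
      {v : V | AltReach M (Sum.inl v) ∧ ¬ AltReach M (Sum.inr v)} :=
  fun _ hv _ hw _ hlt => hw.2 (hv.1.inr_of_inl_of_lt hM hlt)

/-- If M is a maximum matching and S the set of vertices reachable by alternating
paths from unmatched vertices of V⁻, then
A = {v : v⁻ ∈ S and v⁺ ∉ S} is an antichain. -/
theorem altReach_antichain (V : Type*) [Fintype V] [PartialOrder V]
    (M : Finset (V × V)) (hM : IsPosetMatching M)
    (hmax : ∀ M' : Finset (V × V), IsPosetMatching M' → M'.card ≤ M.card) :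
    IsAntichain (· < ·)
      {v : V | AltReach M (Sum.inl v) ∧ ¬ AltReach M (Sum.inr v)} :=
  altReach_antichain_general V M hM
end
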